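/- arXiv:1309.5324 — 4 statements merged into one kernel-verified Lean document; each statement's English description precedes it below -/
import Mathlib

section
/- Asymptotics of the Casimirs (Proposition 8.1): For every R > 0 there exists C > 0 such that for all C², 1-periodic functions α, β : ℝ → ℝ with ∫₀¹ α = ∫₀¹ β = 0 and ‖α‖_{C²} ≤ R, ‖β‖_{C²} ≤ R, and for every integer N ≥ 1: |∏_{n=1}^{N} (1 + (2N)^{−2} α(n/N)) − 1| ≤ C N^{−3} and |(2N)^{−2} ∑_{n=1}^{N} β(n/N)| ≤ C N^{−3}. -/
/-!
For a `1`-periodic `f` the Riemann sum `N⁻¹ ∑_{n=1}^N f (n/N)` coincides with the trapezoidal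
approximation of `∫₀¹ f = 0`, so it is `O(N⁻²)` with constant `sup |f''| / 12`; this gives the bound
on `p_N` at once. For `q_N`, put `x_n = α(n/N) / (4N²) = O(N⁻²)` and compare `∏ (1 + x_n)` with
`exp (∑ x_n)` factor by factor: each factor contributes `O(x_n²) = O(N⁻⁴)`, so all `N` together
contribute `O(N⁻³)`, while `exp (∑ x_n) - 1 = O(|∑ x_n|) = O(N⁻³)` by the Riemann-sum estimate for `α`.
-/

open Finset

theorem Function.Periodic.trapezoidal_integral_eq_sum_Icc {f : ℝ → ℝ} {T : ℝ}
    (hf : Function.Periodic f T) {N : ℕ} (hN : 0 < N) (a : ℝ) :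
    trapezoidal_integral f N a (a + T) = T / N * ∑ n ∈ Icc 1 N, f (a + n * T / N) := by
  obtain ⟨M, rfl⟩ := Nat.exists_eq_add_one_of_ne_zero hN.ne'
  have hlast : f (a + (1 + M : ℕ) * T / (M + 1 : ℕ)) = f a := by
    rw [add_comm 1 M, mul_div_cancel_left₀ _ (by positivity), hf a]
  rw [trapezoidal_integral, add_sub_cancel_left, hf a, add_self_div_two,
    ← Ico_add_one_right_eq_Icc, sum_Ico_eq_sum_range, Nat.add_sub_cancel, Nat.add_sub_cancel,
    sum_range_succ, hlast]
  push_cast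
  ring_nf

theorem Function.Periodic.abs_sum_Icc_le_of_integral_eq_zero {f : ℝ → ℝ}
    (hper : Function.Periodic f 1) (hf : ContDiff ℝ 2 f) (hint : ∫ x in (0 : ℝ)..1, f x = 0)
    {M : ℝ} (hM : ∀ x, |deriv (deriv f) x| ≤ M) {N : ℕ} (hN : 0 < N) :
    |∑ n ∈ Icc 1 N, f (n / N)| ≤ M / (12 * N) := by
  have hf'' : ∀ x, |iteratedDerivWithin 2 f (Set.uIcc 0 1) x| ≤ M := by
    intro x
    by_cases hx : x ∈ Set.uIcc (0 : ℝ) 1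
    · rw [iteratedDerivWithin_eq_iteratedDeriv (uniqueDiffOn_uIcc zero_ne_one) hf.contDiffAt hx,
        iteratedDeriv_succ, iteratedDeriv_one]
      exact hM x
    -- `trapezoidal_error_le_of_c2` wants the bound everywhere; off `[0, 1]` this derivative is `0`.
    · rw [iteratedDerivWithin_succ, derivWithin_zero_of_notMem_closure
        (by rwa [Set.uIcc, closure_Icc]), abs_zero]
      exact (abs_nonneg _).trans (hM 0)
  have herr := trapezoidal_error_le_of_c2 hf.contDiffOn hf'' hN
  rw [trapezoidal_error, hint, sub_zero, ← zero_add 1,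
    hper.trapezoidal_integral_eq_sum_Icc hN] at herr
  have hN' : (0 : ℝ) < N := by exact_mod_cast hN
  simp only [zero_add, mul_one, sub_zero, one_pow, abs_mul, abs_div, abs_one, Nat.abs_cast] at herr
  rw [div_mul_eq_mul_div, one_mul, div_le_div_iff₀ hN' (by positivity)] at herr
  rw [le_div_iff₀ (by positivity)]
  nlinarith

theorem norm_prod_sub_prod_le {ι R : Type*} [NormedCommRing R] [NormOneClass R] (s : Finset ι)
    {a b : ι → R} {w : ι → ℝ} (ha : ∀ i ∈ s, ‖a i‖ ≤ w i) (hb : ∀ i ∈ s, ‖b i‖ ≤ w i)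
    (hw : ∀ i ∈ s, 1 ≤ w i) :
    ‖∏ i ∈ s, a i - ∏ i ∈ s, b i‖ ≤ (∑ i ∈ s, ‖a i - b i‖) * ∏ i ∈ s, w i := by
  classical
  induction s using Finset.induction_on with
  | empty => simp
  | insert j s hj ih =>
    simp only [mem_insert, forall_eq_or_imp] at ha hb hw
    have hw0 : ∀ i ∈ s, 0 ≤ w i := fun i hi => zero_le_one.trans (hw.2 i hi)
    have hprod : ‖∏ i ∈ s, a i‖ ≤ ∏ i ∈ s, w i :=
      (Finset.norm_prod_le _ _).trans (prod_le_prod (fun _ _ => norm_nonneg _) ha.2)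
    have hsplit : a j * ∏ i ∈ s, a i - b j * ∏ i ∈ s, b i
        = (a j - b j) * ∏ i ∈ s, a i + b j * (∏ i ∈ s, a i - ∏ i ∈ s, b i) := by ring
    rw [prod_insert hj, prod_insert hj, prod_insert hj, sum_insert hj, hsplit]
    have hW : 0 ≤ ∏ i ∈ s, w i := prod_nonneg hw0
    calc _ ≤ ‖a j - b j‖ * ‖∏ i ∈ s, a i‖ + ‖b j‖ * ‖∏ i ∈ s, a i - ∏ i ∈ s, b i‖ :=
          (norm_add_le _ _).trans (add_le_add (norm_mul_le _ _) (norm_mul_le _ _))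
      _ ≤ ‖a j - b j‖ * ∏ i ∈ s, w i + w j * ((∑ i ∈ s, ‖a i - b i‖) * ∏ i ∈ s, w i) :=
          add_le_add (mul_le_mul_of_nonneg_left hprod (norm_nonneg _))
            (mul_le_mul hb.1 (ih ha.2 hb.2 hw.2) (norm_nonneg _) ((norm_nonneg _).trans hb.1))
      _ ≤ _ := by
          nlinarith [mul_nonneg (mul_nonneg (norm_nonneg (a j - b j)) hW) (sub_nonneg.2 hw.1)]

theorem Real.abs_exp_sub_sum_range_le (x : ℝ) (n : ℕ) :
    |Real.exp x - ∑ m ∈ range n, x ^ m / m.factorial| ≤ |x| ^ n * Real.exp |x| := by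
  have h := Complex.norm_exp_sub_sum_le_norm_mul_exp x n
  rw [Complex.norm_real, Real.norm_eq_abs] at h
  convert h using 2
  rw [← Complex.ofReal_exp, ← Real.norm_eq_abs, ← Complex.norm_real]
  push_cast
  rfl

theorem abs_prod_one_add_sub_one_le {ι : Type*} {s : Finset ι} {x : ι → ℝ} {ε : ℝ}
    (hx : ∀ i ∈ s, |x i| ≤ ε) :
    |∏ i ∈ s, (1 + x i) - 1| ≤ (#s * ε ^ 2 + |∑ i ∈ s, x i|) * Real.exp (2 * #s * ε) := by
  rcases s.eq_empty_or_nonempty with rfl | ⟨i₀, hi₀⟩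
  · simp
  have hε0 : 0 ≤ ε := (abs_nonneg _).trans (hx i₀ hi₀)
  have hε : ε ≤ #s * ε := le_mul_of_one_le_left hε0 (by exact_mod_cast card_pos.mpr ⟨i₀, hi₀⟩)
  have habs_sum : ∑ i ∈ s, |x i| ≤ #s * ε := by
    simpa using sum_le_card_nsmul s _ _ hx
  set S := ∑ i ∈ s, x i
  have hS : |S| ≤ #s * ε := (abs_sum_le_sum_abs _ _).trans habs_sum
  have hlin : ∀ i ∈ s, |1 + x i - Real.exp (x i)| ≤ ε ^ 2 * Real.exp ε := by
    intro i hi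
    have h := Real.abs_exp_sub_sum_range_le (x i) 2
    simp only [sum_range_succ, sum_range_zero] at h
    rw [abs_sub_comm]
    calc _ ≤ |x i| ^ 2 * Real.exp |x i| := by convert h using 2; simp
      _ ≤ _ := by gcongr; exacts [hx i hi, hx i hi]
  have htele :
      |∏ i ∈ s, (1 + x i) - Real.exp S| ≤ #s * (ε ^ 2 * Real.exp ε) * Real.exp (#s * ε) := by
    have h := norm_prod_sub_prod_le s (a := fun i => 1 + x i) (b := fun i => Real.exp (x i))
      (w := fun i => Real.exp |x i|) (fun i _ => ?_) (fun i _ => ?_)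
      (fun i _ => Real.one_le_exp (abs_nonneg _))
    · rw [Real.exp_sum]
      simp only [Real.norm_eq_abs] at h
      refine h.trans ?_
      rw [← Real.exp_sum]
      gcongr
      simpa using sum_le_card_nsmul s _ _ hlin
    · exact (abs_add_le _ _).trans (by rw [abs_one, add_comm]; exact Real.add_one_le_exp _)
    · rw [Real.norm_eq_abs, Real.abs_exp]; exact Real.exp_le_exp.mpr (le_abs_self _)
  have hexp : |Real.exp S - 1| ≤ |S| * Real.exp (#s * ε) := by
    have h := Real.abs_exp_sub_sum_range_le S 1
    simp only [sum_range_one, pow_zero, pow_one, Nat.factorial_zero, Nat.cast_one, div_one] at h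
    exact h.trans (by gcongr)
  calc |∏ i ∈ s, (1 + x i) - 1|
      ≤ |∏ i ∈ s, (1 + x i) - Real.exp S| + |Real.exp S - 1| := abs_sub_le _ _ _
    _ ≤ #s * (ε ^ 2 * Real.exp ε) * Real.exp (#s * ε) + |S| * Real.exp (#s * ε) :=
        add_le_add htele hexp
    _ ≤ #s * (ε ^ 2 * Real.exp (#s * ε)) * Real.exp (#s * ε) +
          |S| * (Real.exp (#s * ε) * Real.exp (#s * ε)) := by
        gcongr
        exact le_mul_of_one_le_left (Real.exp_nonneg _) (Real.one_le_exp (by positivity))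
    _ = _ := by rw [show 2 * (#s : ℝ) * ε = #s * ε + #s * ε by ring, Real.exp_add]; ring

/-- Proposition 8.1: asymptotics of the Casimirs `q_N` and `p_N`. -/
theorem casimir_asymptotics (R : ℝ) (hR : 0 < R) :
    ∃ C : ℝ, 0 < C ∧
      ∀ α β : ℝ → ℝ,
        ContDiff ℝ 2 α → Function.Periodic α 1 → (∫ x in (0:ℝ)..1, α x) = 0 →
        ContDiff ℝ 2 β → Function.Periodic β 1 → (∫ x in (0:ℝ)..1, β x) = 0 →
        (∀ x, |α x| + |deriv α x| + |deriv (deriv α) x| ≤ R) →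
        (∀ x, |β x| + |deriv β x| + |deriv (deriv β) x| ≤ R) →
        ∀ N : ℕ, 1 ≤ N →
          |(∏ n ∈ Finset.Icc 1 N, (1 + α ((n : ℝ) / N) / (4 * (N : ℝ) ^ 2))) - 1|
              ≤ C / (N : ℝ) ^ 3 ∧
          |(∑ n ∈ Finset.Icc 1 N, β ((n : ℝ) / N)) / (4 * (N : ℝ) ^ 2)|
              ≤ C / (N : ℝ) ^ 3 := by
  refine ⟨(R ^ 2 + R) * Real.exp R, by positivity, ?_⟩
  intro α β hα hα_per hα_int hβ hβ_per hβ_int hα_bd hβ_bd N hN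
  have hN' : (0 : ℝ) < N := by exact_mod_cast hN
  have hriemann : ∀ f : ℝ → ℝ, ContDiff ℝ 2 f → Function.Periodic f 1 → ∫ x in (0 : ℝ)..1, f x = 0 →
      (∀ x, |f x| + |deriv f x| + |deriv (deriv f) x| ≤ R) →
      |(∑ n ∈ Icc 1 N, f (n / N)) / (4 * (N : ℝ) ^ 2)| ≤ R / 48 / N ^ 3 := by
    intro f hf hper hint hbd
    have h := hper.abs_sum_Icc_le_of_integral_eq_zero hf hint (M := R)
      (fun x => by linarith [hbd x, abs_nonneg (f x), abs_nonneg (deriv f x)]) hN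
    rw [abs_div, abs_of_pos (show (0 : ℝ) < 4 * N ^ 2 by positivity)]
    calc _ ≤ R / (12 * N) / (4 * (N : ℝ) ^ 2) := by gcongr
      _ = _ := by field_simp; ring
  have hα_le : ∀ n ∈ Icc 1 N, |α (n / N) / (4 * (N : ℝ) ^ 2)| ≤ R / (4 * N ^ 2) := by
    intro n _
    rw [abs_div, abs_of_pos (show (0 : ℝ) < 4 * N ^ 2 by positivity)]
    gcongr
    linarith [hα_bd (n / N), abs_nonneg (deriv α (n / N)), abs_nonneg (deriv (deriv α) (n / N))]
  have hexp : 2 * N * (R / (4 * N ^ 2)) ≤ R := by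
    rw [show 2 * N * (R / (4 * N ^ 2)) = R / (2 * N) by field_simp; ring]
    exact div_le_self hR.le (by linarith [show (1 : ℝ) ≤ N by exact_mod_cast hN])
  constructor
  · refine (abs_prod_one_add_sub_one_le hα_le).trans ?_
    rw [Nat.card_Icc, Nat.add_sub_cancel, ← Finset.sum_div]
    calc _ ≤ (N * (R / (4 * N ^ 2)) ^ 2 + R / 48 / N ^ 3) * Real.exp R := by
          gcongr
          exact hriemann α hα hα_per hα_int hα_bd
      _ = (R ^ 2 / 16 + R / 48) * Real.exp R / N ^ 3 := by field_simp; ring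
      _ ≤ _ := by gcongr ?_ * _ / _; nlinarith
  · refine (hriemann β hβ hβ_per hβ_int hβ_bd).trans ?_
    gcongr
    nlinarith [Real.add_one_le_exp R]
end

section
/- L² bounds on derivatives of periodic eigenfunctions of a Hill operator (Lemma 6.1): Let q : ℝ → ℝ be C² and 1-periodic and set Q = sup_x (|q(x)| + |q'(x)| + |q''(x)|). Let λ ∈ ℝ and L ≥ 0 with |λ| ≤ L and Q + L ≥ 1, and let g : ℝ → ℝ be a C⁴, 1-periodic function with −g'' + q g = λ g and ∫₀¹ g(x)² dx = 1. Then: (i) ‖g'‖_{L²(0,1)} ≤ (Q + L)^{1/2}; (ii) ‖g''‖_{L²(0,1)} ≤ Q + L; (iii) ‖g'''‖_{L²(0,1)} ≤ (Q + L)^{3/2} + Q; (iv) ‖g''''‖_{L²(0,1)} ≤ 3(Q + L)² + Q. -/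
/-!
Integrating by parts over a period, `‖g'‖² = -∫ g g'' = ∫ (λ - q) g² ≤ (Q + L) ‖g‖²`.
Differentiating `g'' = (q - λ) g` gives `g''' = q' g + (q - λ) g'` and
`g'''' = q'' g + 2 q' g' + (q - λ) g''`; since `|q|, |q'|, |q''| ≤ Q` and `|q - λ| ≤ Q + L`,
the triangle inequality in `L²` bounds each derivative by the previous ones, and `Q + L ≥ 1`
lets `√(Q + L) ≤ Q + L` absorb the cross term in the last bound.
-/

open MeasureTheory Set Function Real
open scoped ENNReal

section LpNorm

variable {α E F : Type*} {m : MeasurableSpace α} {μ : Measure α} {p : ℝ≥0∞}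
  [NormedAddCommGroup E] [NormedAddCommGroup F]

theorem lpNorm_le_sum_mul_of_norm_le {ι : Type*} (s : Finset ι) {w : α → F} {f : ι → α → E}
    {c : ι → ℝ} (hp : 1 ≤ p) (hf : ∀ i ∈ s, MemLp (f i) p μ) (hc : ∀ i ∈ s, 0 ≤ c i)
    (h : ∀ x, ‖w x‖ ≤ ∑ i ∈ s, c i * ‖f i x‖) :
    lpNorm w p μ ≤ ∑ i ∈ s, c i * lpNorm (f i) p μ := by
  have hterm : ∀ i ∈ s, MemLp (fun x => c i * ‖f i x‖) p μ :=
    fun i hi => (hf i hi).norm.const_mul (c i)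
  calc lpNorm w p μ ≤ lpNorm (∑ i ∈ s, fun x => c i * ‖f i x‖) p μ :=
        lpNorm_mono_real (memLp_finsetSum' s hterm) (by simpa using h)
    _ ≤ ∑ i ∈ s, lpNorm (fun x => c i * ‖f i x‖) p μ := lpNorm_sum_le hterm hp
    _ = ∑ i ∈ s, c i * lpNorm (f i) p μ := by
        refine Finset.sum_congr rfl fun i hi => ?_
        have := lpNorm_const_smul (c i) (fun x => ‖f i x‖) μ (p := p)
        rwa [lpNorm_norm (hf i hi).aestronglyMeasurable, Real.nnnorm_of_nonneg (hc i hi)] at this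

theorem sqrt_integral_sq_eq_lpNorm {f : α → ℝ} (hf : AEStronglyMeasurable f μ) :
    √(∫ x, f x ^ 2 ∂μ) = lpNorm f 2 μ := by
  rw [lpNorm_eq_integral_norm_rpow_toReal two_ne_zero ENNReal.ofNat_ne_top hf, sqrt_eq_rpow]
  simp [Real.norm_eq_abs, sq_abs]

end LpNorm

theorem sqrt_intervalIntegral_sq_eq_lpNorm {a b : ℝ} (hab : a ≤ b) {f : ℝ → ℝ}
    (hf : AEStronglyMeasurable f (volume.restrict (Ioc a b))) :
    √(∫ x in a..b, f x ^ 2) = lpNorm f 2 (volume.restrict (Ioc a b)) := by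
  rw [intervalIntegral.integral_of_le hab, sqrt_integral_sq_eq_lpNorm hf]

theorem Continuous.memLp_two_restrict_Ioc {f : ℝ → ℝ} (hf : Continuous f) (a b : ℝ) :
    MemLp f 2 (volume.restrict (Ioc a b)) :=
  (memLp_two_iff_integrable_sq hf.aestronglyMeasurable).2 (hf.pow 2).integrableOn_Ioc

theorem Function.Periodic.deriv {f : ℝ → ℝ} {c : ℝ} (hf : Periodic f c) :
    Periodic (deriv f) c := by
  intro x
  rw [← deriv_comp_add_const f c x, funext hf]

theorem abs_deriv_le_of_eq_iSup {q : ℝ → ℝ} {T Q : ℝ} (hq : ContDiff ℝ 2 q)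
    (hqper : Periodic q T) (hT : T ≠ 0)
    (hQ : Q = ⨆ x, (|q x| + |deriv q x| + |deriv (deriv q) x|)) :
    (∀ x, |q x| ≤ Q) ∧ (∀ x, |deriv q x| ≤ Q) ∧ (∀ x, |deriv (deriv q) x| ≤ Q) := by
  have hq1 : Continuous (deriv q) := hq.continuous_deriv one_le_two
  have hq2 : Continuous (deriv (deriv q)) := (hq.deriv' (n := 1)).continuous_deriv_one
  have hper : Periodic (fun x => |q x| + |deriv q x| + |deriv (deriv q) x|) T := fun x => by
    simp only [hqper x, hqper.deriv x, hqper.deriv.deriv x]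
  have hle (x : ℝ) : |q x| + |deriv q x| + |deriv (deriv q) x| ≤ Q :=
    hQ ▸ le_ciSup (hper.compact_of_continuous hT (by fun_prop)).bddAbove x
  refine ⟨fun x => ?_, fun x => ?_, fun x => ?_⟩ <;>
    linarith [hle x, abs_nonneg (q x), abs_nonneg (deriv q x), abs_nonneg (deriv (deriv q) x)]

theorem integral_deriv_sq_eq_of_periodic {g : ℝ → ℝ} {T : ℝ} (hg : ContDiff ℝ 2 g)
    (hper : Periodic g T) :
    ∫ x in 0..T, deriv g x ^ 2 = -∫ x in 0..T, g x * deriv (deriv g) x := by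
  have hg1 : ContDiff ℝ 1 (deriv g) := hg.deriv'
  have hibp := intervalIntegral.integral_mul_deriv_eq_deriv_mul
    (fun x _ => (hg.differentiable two_ne_zero x).hasDerivAt)
    (fun x _ => (hg1.differentiable one_ne_zero x).hasDerivAt)
    (hg1.continuous.intervalIntegrable 0 T) (hg1.continuous_deriv_one.intervalIntegrable 0 T)
  have hb : g T * deriv g T = g 0 * deriv g 0 := by
    rw [← zero_add T, hper 0, hper.deriv 0]
  rw [hibp, hb, sub_self, zero_sub, neg_neg]
  simp only [sq]

section Hill

variable {q g : ℝ → ℝ} {lam : ℝ}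

theorem deriv_deriv_eq_of_hill (heq : ∀ x, -deriv (deriv g) x + q x * g x = lam * g x) :
    deriv (deriv g) = fun x => (q x - lam) * g x :=
  funext fun x => by linarith [heq x]

theorem deriv_deriv_deriv_eq_of_hill (heq : ∀ x, -deriv (deriv g) x + q x * g x = lam * g x)
    (hq : Differentiable ℝ q) (hg : Differentiable ℝ g) :
    deriv (deriv (deriv g)) = fun x => deriv q x * g x + (q x - lam) * deriv g x := by
  rw [deriv_deriv_eq_of_hill heq]
  exact funext fun x => (((hq x).hasDerivAt.sub_const lam).mul (hg x).hasDerivAt).deriv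

theorem deriv_deriv_deriv_deriv_eq_of_hill
    (heq : ∀ x, -deriv (deriv g) x + q x * g x = lam * g x)
    (hq : ContDiff ℝ 2 q) (hg : ContDiff ℝ 2 g) :
    deriv (deriv (deriv (deriv g))) = fun x =>
      deriv (deriv q) x * g x + 2 * (deriv q x * deriv g x) + (q x - lam) * deriv (deriv g) x := by
  have hq1 : Differentiable ℝ (deriv q) := (hq.deriv' (n := 1)).differentiable one_ne_zero
  have hg1 : Differentiable ℝ (deriv g) := (hg.deriv' (n := 1)).differentiable one_ne_zero
  have hq0 : Differentiable ℝ q := hq.differentiable two_ne_zero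
  have hg0 : Differentiable ℝ g := hg.differentiable two_ne_zero
  rw [deriv_deriv_deriv_eq_of_hill heq hq0 hg0]
  funext x
  refine ((((hq1 x).hasDerivAt.mul (hg0 x).hasDerivAt).add
    (((hq0 x).hasDerivAt.sub_const lam).mul (hg1 x).hasDerivAt)).deriv).trans ?_
  ring

theorem integral_deriv_sq_le_of_hill {T K : ℝ} (hT : 0 ≤ T) (hq : Continuous q)
    (hg : ContDiff ℝ 2 g) (hper : Periodic g T)
    (heq : ∀ x, -deriv (deriv g) x + q x * g x = lam * g x) (hK : ∀ x, lam - q x ≤ K) :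
    ∫ x in 0..T, deriv g x ^ 2 ≤ K * ∫ x in 0..T, g x ^ 2 := by
  rw [integral_deriv_sq_eq_of_periodic hg hper, deriv_deriv_eq_of_hill heq,
    ← intervalIntegral.integral_neg, ← intervalIntegral.integral_const_mul]
  refine intervalIntegral.integral_mono_on hT (Continuous.intervalIntegrable (by fun_prop) _ _)
    (Continuous.intervalIntegrable (by fun_prop) _ _) fun x _ => ?_
  nlinarith [hK x, sq_nonneg (g x)]

variable {μ : Measure ℝ}

theorem lpNorm_deriv_deriv_le_of_hill {K : ℝ}
    (heq : ∀ x, -deriv (deriv g) x + q x * g x = lam * g x) (hK : ∀ x, |q x - lam| ≤ K)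
    (hg : MemLp g 2 μ) :
    lpNorm (deriv (deriv g)) 2 μ ≤ K * lpNorm g 2 μ := by
  simpa using lpNorm_le_sum_mul_of_norm_le Finset.univ (f := fun _ : Fin 1 => g)
    (c := fun _ => K) one_le_two (fun _ _ => hg) (fun _ _ => (abs_nonneg _).trans (hK 0))
    fun x => by
      simp only [deriv_deriv_eq_of_hill heq, Real.norm_eq_abs, abs_mul, Finset.univ_unique,
        Finset.sum_singleton]
      gcongr
      exact hK x

theorem lpNorm_deriv_deriv_deriv_le_of_hill {Q K : ℝ}
    (heq : ∀ x, -deriv (deriv g) x + q x * g x = lam * g x) (hq : Differentiable ℝ q)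
    (hg : Differentiable ℝ g) (hQ₁ : ∀ x, |deriv q x| ≤ Q) (hK : ∀ x, |q x - lam| ≤ K)
    (hg0 : MemLp g 2 μ) (hg1 : MemLp (deriv g) 2 μ) :
    lpNorm (deriv (deriv (deriv g))) 2 μ ≤ Q * lpNorm g 2 μ + K * lpNorm (deriv g) 2 μ := by
  simpa using lpNorm_le_sum_mul_of_norm_le Finset.univ (f := ![g, deriv g]) (c := ![Q, K])
    one_le_two (by simp [Fin.forall_fin_two, hg0, hg1])
    (by simp [Fin.forall_fin_two, (abs_nonneg _).trans (hQ₁ 0), (abs_nonneg _).trans (hK 0)])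
    fun x => by
      simp only [deriv_deriv_deriv_eq_of_hill heq hq hg, Real.norm_eq_abs, Fin.sum_univ_two,
        Matrix.cons_val_zero, Matrix.cons_val_one]
      refine (abs_add_le _ _).trans ?_
      rw [abs_mul, abs_mul]
      gcongr
      exacts [hQ₁ x, hK x]

theorem lpNorm_deriv_deriv_deriv_deriv_le_of_hill {Q K : ℝ}
    (heq : ∀ x, -deriv (deriv g) x + q x * g x = lam * g x) (hq : ContDiff ℝ 2 q)
    (hg : ContDiff ℝ 2 g) (hQ₁ : ∀ x, |deriv q x| ≤ Q) (hQ₂ : ∀ x, |deriv (deriv q) x| ≤ Q)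
    (hK : ∀ x, |q x - lam| ≤ K) (hg0 : MemLp g 2 μ) (hg1 : MemLp (deriv g) 2 μ)
    (hg2 : MemLp (deriv (deriv g)) 2 μ) :
    lpNorm (deriv (deriv (deriv (deriv g)))) 2 μ ≤
      Q * lpNorm g 2 μ + 2 * Q * lpNorm (deriv g) 2 μ + K * lpNorm (deriv (deriv g)) 2 μ := by
  have hQ0 : 0 ≤ Q := (abs_nonneg _).trans (hQ₁ 0)
  simpa [Fin.sum_univ_three, add_assoc] using lpNorm_le_sum_mul_of_norm_le Finset.univ
    (f := ![g, deriv g, deriv (deriv g)]) (c := ![Q, 2 * Q, K])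
    one_le_two (by simp [Fin.forall_fin_succ, hg0, hg1, hg2])
    (by simp [Fin.forall_fin_succ, hQ0, (abs_nonneg _).trans (hK 0)])
    fun x => by
      simp only [deriv_deriv_deriv_deriv_eq_of_hill heq hq hg, Real.norm_eq_abs,
        Fin.sum_univ_three, Matrix.cons_val_zero, Matrix.cons_val_one, Matrix.cons_val_two,
        Matrix.tail_cons, Matrix.head_cons]
      refine (abs_add_three _ _ _).trans ?_
      rw [abs_mul, abs_mul, abs_mul, abs_mul, abs_two, mul_assoc]
      gcongr
      exacts [hQ₂ x, hQ₁ x, hK x]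

end Hill

/-- Lemma 6.1: L² bounds on the derivatives of a normalized periodic
eigenfunction of the Hill operator `-d²/dx² + q`. -/
theorem hill_eigenfunction_derivative_bounds
    (q : ℝ → ℝ) (hq : ContDiff ℝ 2 q) (hqper : Function.Periodic q 1)
    (Q : ℝ) (hQ : Q = ⨆ x : ℝ, (|q x| + |deriv q x| + |deriv (deriv q) x|))
    (lam L : ℝ) (hL : 0 ≤ L) (hlam : |lam| ≤ L) (hQL : 1 ≤ Q + L)
    (g : ℝ → ℝ) (hg : ContDiff ℝ 4 g) (hgper : Function.Periodic g 1)
    (heq : ∀ x, -deriv (deriv g) x + q x * g x = lam * g x)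
    (hnorm : (∫ x in (0:ℝ)..1, g x ^ 2) = 1) :
    Real.sqrt (∫ x in (0:ℝ)..1, deriv g x ^ 2) ≤ (Q + L) ^ ((1:ℝ)/2) ∧
    Real.sqrt (∫ x in (0:ℝ)..1, deriv (deriv g) x ^ 2) ≤ Q + L ∧
    Real.sqrt (∫ x in (0:ℝ)..1, deriv (deriv (deriv g)) x ^ 2)
      ≤ (Q + L) ^ ((3:ℝ)/2) + Q ∧
    Real.sqrt (∫ x in (0:ℝ)..1, deriv (deriv (deriv (deriv g))) x ^ 2)
      ≤ 3 * (Q + L) ^ 2 + Q := by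
  obtain ⟨hQ₀, hQ₁, hQ₂⟩ := abs_deriv_le_of_eq_iSup hq hqper one_ne_zero hQ
  have hK : ∀ x, |q x - lam| ≤ Q + L := fun x => (abs_sub _ _).trans (add_le_add (hQ₀ x) hlam)
  have hg2 : ContDiff ℝ 2 g := hg.of_le (by norm_num)
  have h1 : ∫ x in (0:ℝ)..1, deriv g x ^ 2 ≤ Q + L := by
    simpa [hnorm] using integral_deriv_sq_le_of_hill zero_le_one hq.continuous hg2 hgper heq
      fun x => by linarith [neg_le_of_abs_le (hK x)]
  have c0 : Continuous g := hg.continuous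
  have c1 : Continuous (deriv g) := (ContDiff.iterate_deriv' 3 1 hg).continuous
  have c2 : Continuous (deriv (deriv g)) := (ContDiff.iterate_deriv' 2 2 hg).continuous
  have c3 : Continuous (deriv (deriv (deriv g))) := (ContDiff.iterate_deriv' 1 3 hg).continuous
  have c4 : Continuous (deriv (deriv (deriv (deriv g)))) :=
    (ContDiff.iterate_deriv' 0 4 hg).continuous
  set μ := volume.restrict (Ioc (0:ℝ) 1)
  have hN (f : ℝ → ℝ) (hf : Continuous f) : √(∫ x in (0:ℝ)..1, f x ^ 2) = lpNorm f 2 μ :=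
    sqrt_intervalIntegral_sq_eq_lpNorm zero_le_one hf.aestronglyMeasurable
  have hM (f : ℝ → ℝ) (hf : Continuous f) : MemLp f 2 μ := hf.memLp_two_restrict_Ioc 0 1
  have n0 : lpNorm g 2 μ = 1 := by rw [← hN g c0, hnorm, sqrt_one]
  have n1 : lpNorm (deriv g) 2 μ ≤ √(Q + L) := hN _ c1 ▸ sqrt_le_sqrt h1
  have n2 := lpNorm_deriv_deriv_le_of_hill heq hK (hM g c0)
  have n3 := lpNorm_deriv_deriv_deriv_le_of_hill heq (hq.differentiable two_ne_zero)
    (hg2.differentiable two_ne_zero) hQ₁ hK (hM g c0) (hM _ c1)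
  have n4 := lpNorm_deriv_deriv_deriv_deriv_le_of_hill heq hq hg2 hQ₁ hQ₂ hK
    (hM g c0) (hM _ c1) (hM _ c2)
  rw [n0] at n2 n3 n4
  rw [← sqrt_eq_rpow, hN _ c1, hN _ c2, hN _ c3, hN _ c4]
  have hQ0 : 0 ≤ Q := (abs_nonneg _).trans (hQ₀ 0)
  have hsqrt : √(Q + L) ≤ Q + L := sqrt_le_self_iff.2 (Or.inr hQL)
  have h32 : (Q + L) ^ ((3:ℝ)/2) = (Q + L) * √(Q + L) := by
    rw [sqrt_eq_rpow, ← rpow_one_add' (by linarith) (by norm_num)]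
    norm_num
  have n1' : 0 ≤ lpNorm (deriv g) 2 μ := lpNorm_nonneg
  exact ⟨n1, by linarith, h32 ▸ by nlinarith, by nlinarith⟩
end

section
/- Near-isometry of the Lagrangian-state map in Fourier form (Lemma 3.3 (iii)): For every integer N ≥ 1 and all 1-periodic functions f, g : ℝ → ℂ of Sobolev class H¹ (i.e. f, g ∈ L²(ℝ/ℤ) with weak derivatives f', g' ∈ L²(ℝ/ℤ)), one has |∑_{n∈ℤ} f̂_n · conj(ĝ_n) · (1 − e^{−πn²/N})| ≤ (4πN)^{−1} ‖f'‖_{L²(0,1)} ‖g'‖_{L²(0,1)}. -/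
/-!
Write `f = f 0 + ∫₀ˣ f'`. Swapping the order of integration in `∫₀¹ (∫₀ˣ f') e^{-2πinx} dx`
and using `∫₀¹ f' = f 1 - f 0 = 0` gives `f̂'_n = 2πin f̂_n` for every `n`. Since
`1 - e^{-x} ≤ x`, the `n`-th term is then at most
`(πn²/N) |f̂_n| |ĝ_n| = (4πN)⁻¹ |f̂'_n| |ĝ'_n|`, and Cauchy–Schwarz together with Parseval
for `f'` and `g'` bounds the sum.
-/

noncomputable section

open MeasureTheory

/-- The `n`-th Fourier coefficient `f̂_n = ∫₀¹ f(x) e^{-2πinx} dx`. -/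
def fourierCoeff' (f : ℝ → ℂ) (n : ℤ) : ℂ :=
  ∫ x in (0:ℝ)..1, f x * Complex.exp (-2 * (Real.pi : ℂ) * Complex.I * (n : ℂ) * (x : ℂ))

open Set Complex Real

theorem integral_primitive_mul_eq {𝕜 : Type*} [RCLike 𝕜] {a b : ℝ} (hab : a ≤ b)
    {h k : ℝ → 𝕜} (hh : IntegrableOn h (Ioc a b)) (hk : IntegrableOn k (Ioc a b)) :
    ∫ x in a..b, (∫ t in a..x, h t) * k x = ∫ t in a..b, h t * ∫ x in t..b, k x := by
  set μ := volume.restrict (Ioc a b)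
  have hint :
      Integrable (Function.uncurry fun x t => (Iic x).indicator h t * k x) (μ.prod μ) := by
    refine ((hk.mul_prod hh).indicator (measurableSet_le measurable_snd measurable_fst)).congr
      (Filter.Eventually.of_forall fun ⟨x, t⟩ => ?_)
    by_cases htx : t ≤ x <;> simp [htx, mul_comm]
  rw [intervalIntegral.integral_of_le hab, intervalIntegral.integral_of_le hab]
  convert integral_integral_swap hint using 1
  · refine setIntegral_congr_fun measurableSet_Ioc fun x hx => ?_
    rw [intervalIntegral.integral_of_le hx.1.le, integral_mul_const,
      integral_indicator measurableSet_Iic, Measure.restrict_restrict measurableSet_Iic,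
      Iic_inter_Ioc_of_le hx.2]
  · refine setIntegral_congr_fun measurableSet_Ioc fun t ht => ?_
    have hind : ∀ x, (Iic x).indicator h t * k x = h t * (Ici t).indicator k x := fun x => by
      by_cases htx : t ≤ x <;> simp [htx]
    have hset : Ici t ∩ Ioc a b = Icc t b := by
      ext x
      simp only [mem_inter_iff, mem_Ici, mem_Ioc, mem_Icc]
      exact ⟨fun ⟨htx, _, hxb⟩ => ⟨htx, hxb⟩, fun ⟨htx, hxb⟩ => ⟨htx, ht.1.trans_le htx, hxb⟩⟩
    simp only [hind]
    rw [integral_const_mul, integral_indicator measurableSet_Ici,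
      Measure.restrict_restrict measurableSet_Ici, hset, integral_Icc_eq_integral_Ioc,
      intervalIntegral.integral_of_le ht.2]

theorem fourierCoeff'_eq_fourierCoeffOn (f : ℝ → ℂ) (n : ℤ) :
    fourierCoeff' f n = fourierCoeffOn zero_lt_one f n := by
  rw [fourierCoeffOn_eq_integral, fourierCoeff']
  simp only [sub_zero, div_one, one_smul, fourier_coe_apply, smul_eq_mul]
  congr 1
  ext x
  rw [mul_comm]
  congr 2
  push_cast
  ring

theorem hasSum_sq_norm_fourierCoeff' {h : ℝ → ℂ}
    (hL2 : MemLp h 2 (volume.restrict (Ioc 0 1))) :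
    HasSum (fun n => ‖fourierCoeff' h n‖ ^ 2) (∫ x in (0 : ℝ)..1, ‖h x‖ ^ 2) := by
  simpa [fourierCoeff'_eq_fourierCoeffOn] using hasSum_sq_fourierCoeffOn zero_lt_one hL2

theorem fourierCoeff'_eq_mul_fourierCoeff'_primitive {f h : ℝ → ℂ}
    (hh : IntegrableOn h (Ioc 0 1))
    (hf : ∀ x ∈ Icc (0 : ℝ) 1, f x = f 0 + ∫ t in (0 : ℝ)..x, h t) (hper : f 1 = f 0) (n : ℤ) :
    fourierCoeff' h n = 2 * π * I * n * fourierCoeff' f n := by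
  have hmean : ∫ t in (0 : ℝ)..1, h t = 0 := by
    simpa [hper] using hf 1 ⟨zero_le_one, le_rfl⟩
  rcases eq_or_ne n 0 with rfl | hn
  · simp [fourierCoeff', hmean]
  set c : ℂ := -2 * π * I * n
  have hc : c ≠ 0 := by simp [c, Real.pi_ne_zero, hn]
  have hexp : ∀ t : ℝ, ∫ x in t..1, exp (c * x) = (1 - exp (c * t)) / c := fun t => by
    rw [integral_exp_mul_complex hc, ofReal_one, mul_one,
      show c = (-n : ℤ) * (2 * π * I) by push_cast; ring, exp_int_mul_two_pi_mul_I]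
  have he : Continuous fun x : ℝ => exp (c * x) := by fun_prop
  have hh' : IntervalIntegrable h volume 0 1 :=
    (intervalIntegrable_iff_integrableOn_Ioc_of_le zero_le_one).2 hh
  have hsplit : fourierCoeff' f n = (f 0 * ∫ x in (0 : ℝ)..1, exp (c * x)) +
      ∫ t in (0 : ℝ)..1, h t * ∫ x in t..1, exp (c * x) := by
    have hu : IntervalIntegrable (fun x => (∫ t in (0 : ℝ)..x, h t) * exp (c * x)) volume 0 1 :=
      ((intervalIntegral.continuousOn_primitive_interval' hh' left_mem_uIcc).mul
        he.continuousOn).intervalIntegrable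
    have hunfold : fourierCoeff' f n
        = ∫ x in (0 : ℝ)..1, f 0 * exp (c * x) + (∫ t in (0 : ℝ)..x, h t) * exp (c * x) := by
      refine intervalIntegral.integral_congr fun x hx => ?_
      rw [uIcc_of_le zero_le_one] at hx
      rw [hf x hx, add_mul]
    rw [hunfold, intervalIntegral.integral_add ((he.intervalIntegrable 0 1).const_mul _) hu,
      intervalIntegral.integral_const_mul,
      integral_primitive_mul_eq zero_le_one hh he.integrableOn_Ioc]
  have hswap : ∫ t in (0 : ℝ)..1, h t * ∫ x in t..1, exp (c * x)
      = ((∫ t in (0 : ℝ)..1, h t) - fourierCoeff' h n) / c := by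
    simp only [hexp, mul_div_assoc', mul_sub, mul_one]
    rw [intervalIntegral.integral_div,
      intervalIntegral.integral_sub hh' (hh'.mul_continuousOn he.continuousOn), fourierCoeff']
  rw [hsplit, hswap, hexp 0, hmean]
  field_simp
  simp [c]
  ring

theorem one_sub_exp_neg_pi_mul_sq_div_le (N : ℕ) (n : ℤ) :
    1 - Real.exp (-π * (n : ℝ) ^ 2 / N) ≤ (4 * π * N)⁻¹ * (2 * π * n) ^ 2 := by
  have hweight : (4 * π * N)⁻¹ * (2 * π * n) ^ 2 = π * (n : ℝ) ^ 2 / N := by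
    field_simp
    ring
  rw [hweight, neg_mul, neg_div]
  linarith [Real.one_sub_le_exp_neg (π * (n : ℝ) ^ 2 / N)]

theorem norm_mul_conj_mul_one_sub_exp_le (N : ℕ) (n : ℤ) (a b : ℂ) :
    ‖a * (starRingEnd ℂ) b * (1 - Real.exp (-π * (n : ℝ) ^ 2 / N))‖
      ≤ (4 * π * N)⁻¹ * (‖2 * π * I * n * a‖ * ‖2 * π * I * n * b‖) := by
  have hE : Real.exp (-π * (n : ℝ) ^ 2 / N) ≤ 1 := by
    rw [Real.exp_le_one_iff, neg_mul, neg_div, neg_nonpos]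
    positivity
  have hnorm : ‖(2 * π * I * n : ℂ)‖ ^ 2 = (2 * π * n) ^ 2 := by
    simp [mul_pow]
  rw [← ofReal_one, ← ofReal_sub, norm_mul, norm_mul, RCLike.norm_conj, norm_real,
    norm_of_nonneg (sub_nonneg.2 hE), norm_mul _ a, norm_mul _ b]
  calc ‖a‖ * ‖b‖ * (1 - Real.exp (-π * (n : ℝ) ^ 2 / N))
      ≤ ‖a‖ * ‖b‖ * ((4 * π * N)⁻¹ * (2 * π * n) ^ 2) := by
        gcongr
        exact one_sub_exp_neg_pi_mul_sq_div_le N n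
    _ = _ := by rw [← hnorm]; ring

theorem tsum_mul_le_sqrt_mul_sqrt {ι : Type*} {a b : ι → ℝ} (ha : ∀ i, 0 ≤ a i)
    (hb : ∀ i, 0 ≤ b i) (hsa : Summable fun i => a i ^ 2) (hsb : Summable fun i => b i ^ 2) :
    Summable (fun i => a i * b i) ∧
      ∑' i, a i * b i ≤ √(∑' i, a i ^ 2) * √(∑' i, b i ^ 2) := by
  have := Real.summable_and_inner_le_Lp_mul_Lq_tsum_of_nonneg Real.HolderConjugate.two_two ha hb
    (by simpa only [Real.rpow_two] using hsa) (by simpa only [Real.rpow_two] using hsb)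
  simpa only [Real.rpow_two, Real.sqrt_eq_rpow, one_div] using this

theorem near_isometry_fourier_general
    (N : ℕ)
    (f g f' g' : ℝ → ℂ)
    (hfper : Function.Periodic f 1) (hgper : Function.Periodic g 1)
    (hf'L2 : MemLp f' 2 (volume.restrict (Set.Ioc (0:ℝ) 1)))
    (hg'L2 : MemLp g' 2 (volume.restrict (Set.Ioc (0:ℝ) 1)))
    (hf : ∀ x : ℝ, f x = f 0 + ∫ t in (0:ℝ)..x, f' t)
    (hg : ∀ x : ℝ, g x = g 0 + ∫ t in (0:ℝ)..x, g' t) :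
    ‖(∑' n : ℤ, fourierCoeff' f n * (starRingEnd ℂ) (fourierCoeff' g n) *
        (1 - Real.exp (-Real.pi * (n : ℝ) ^ 2 / N)))‖
      ≤ (4 * Real.pi * N)⁻¹ *
          (Real.sqrt (∫ x in (0:ℝ)..1, ‖f' x‖ ^ 2) *
            Real.sqrt (∫ x in (0:ℝ)..1, ‖g' x‖ ^ 2)) := by
  have hcoeff_f := fourierCoeff'_eq_mul_fourierCoeff'_primitive
    (hf'L2.integrable one_le_two) (fun x _ => hf x) (by simpa using hfper 0)
  have hcoeff_g := fourierCoeff'_eq_mul_fourierCoeff'_primitive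
    (hg'L2.integrable one_le_two) (fun x _ => hg x) (by simpa using hgper 0)
  have hparseval_f := hasSum_sq_norm_fourierCoeff' hf'L2
  have hparseval_g := hasSum_sq_norm_fourierCoeff' hg'L2
  obtain ⟨hsummable, hCS⟩ := tsum_mul_le_sqrt_mul_sqrt (fun _ => norm_nonneg _)
    (fun _ => norm_nonneg _) hparseval_f.summable hparseval_g.summable
  rw [hparseval_f.tsum_eq, hparseval_g.tsum_eq] at hCS
  refine (tsum_of_norm_bounded (hsummable.hasSum.mul_left (4 * π * N)⁻¹) fun n => ?_).trans
    (mul_le_mul_of_nonneg_left hCS (by positivity))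
  rw [hcoeff_f, hcoeff_g]
  exact norm_mul_conj_mul_one_sub_exp_le N n _ _

/-- Lemma 3.3 (iii) in Fourier form: for 1-periodic `f, g` of Sobolev class `H¹`
(absolutely continuous with square integrable derivative),
`|∑_n f̂_n conj(ĝ_n)(1 - e^{-πn²/N})| ≤ (4πN)⁻¹ ‖f'‖_{L²(0,1)} ‖g'‖_{L²(0,1)}`. -/
theorem near_isometry_fourier
    (N : ℕ) (hN : 1 ≤ N)
    (f g f' g' : ℝ → ℂ)
    (hfper : Function.Periodic f 1) (hgper : Function.Periodic g 1)
    (hf'per : Function.Periodic f' 1) (hg'per : Function.Periodic g' 1)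
    (hf'loc : LocallyIntegrable f' volume) (hg'loc : LocallyIntegrable g' volume)
    (hf'L2 : MemLp f' 2 (volume.restrict (Set.Ioc (0:ℝ) 1)))
    (hg'L2 : MemLp g' 2 (volume.restrict (Set.Ioc (0:ℝ) 1)))
    (hf : ∀ x : ℝ, f x = f 0 + ∫ t in (0:ℝ)..x, f' t)
    (hg : ∀ x : ℝ, g x = g 0 + ∫ t in (0:ℝ)..x, g' t) :
    ‖(∑' n : ℤ, fourierCoeff' f n * (starRingEnd ℂ) (fourierCoeff' g n) *
        (1 - Real.exp (-Real.pi * (n : ℝ) ^ 2 / N)))‖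
      ≤ (4 * Real.pi * N)⁻¹ *
          (Real.sqrt (∫ x in (0:ℝ)..1, ‖f' x‖ ^ 2) *
            Real.sqrt (∫ x in (0:ℝ)..1, ‖g' x‖ ^ 2)) :=
  near_isometry_fourier_general N f g f' g' hfper hgper hf'L2 hg'L2 hf hg

end
end

section
/- Two-sided bounds for the partial cosine product, upper range (Lemma A.4): There exists a constant c > 0 such that for all integers M, N with 1 ≤ M < N: 2^M ≥ ∏_{n=1}^{M} (1 + cos(nπ/N)) ≥ 2^M · exp(−c M³/N²). -/
open scoped Real

/-!
Each factor is at most `2`. Since `1 + cos (2θ) = 2 cos² θ`, the product is `2 ^ M (∏ cos θₙ)²`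
with `θₙ = nπ/(2N)`. If `2M ≤ N`, every `θₙ` is at most `θ_M ≤ π/4`, where
`cos θ ≥ 1 - θ²/2 ≥ exp (-θ²)`, so `(∏ cos θₙ)² ≥ exp (-2M θ_M²)`. If `N < 2M`, then
`M³/N² > N/8`, and Jordan's inequality `cos θₙ ≥ 1 - n/N` bounds `∏ cos θₙ` below by
`∏_{n<N} (1 - n/N) = N!/N^N ≥ exp (-N)`.
-/

open Real Finset Nat

lemma exp_neg_two_mul_le_one_sub {s : ℝ} (hs₀ : 0 ≤ s) (hs : s ≤ 1 / 2) :
    exp (-(2 * s)) ≤ 1 - s := by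
  rw [exp_neg, inv_le_iff_one_le_mul₀ (exp_pos _)]
  nlinarith [add_one_le_exp (2 * s)]

lemma exp_neg_sq_le_cos {x : ℝ} (hx : x ^ 2 ≤ 1) : exp (-x ^ 2) ≤ cos x :=
  calc exp (-x ^ 2) = exp (-(2 * (x ^ 2 / 2))) := by ring_nf
    _ ≤ 1 - x ^ 2 / 2 := exp_neg_two_mul_le_one_sub (by positivity) (by linarith)
    _ ≤ cos x := one_sub_sq_div_two_le_cos

lemma one_sub_le_cos_mul_pi_div_two {t : ℝ} (ht₀ : 0 ≤ t) (ht₁ : t ≤ 1) :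
    1 - t ≤ cos (t * (π / 2)) := by
  have := one_sub_mul_le_cos (x := t * (π / 2)) (by positivity) (by nlinarith [pi_pos])
  rwa [show 2 / π * (t * (π / 2)) = t by field_simp] at this

lemma one_add_cos_eq_two_mul_cos_half_sq (x : ℝ) : 1 + cos x = 2 * cos (x / 2) ^ 2 := by
  rw [cos_sq]; ring_nf

lemma prod_one_add_cos {ι : Type*} (s : Finset ι) (f : ι → ℝ) :
    ∏ i ∈ s, (1 + cos (f i)) = 2 ^ #s * (∏ i ∈ s, cos (f i / 2)) ^ 2 := by
  simp_rw [one_add_cos_eq_two_mul_cos_half_sq, prod_mul_distrib, prod_const, prod_pow]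

lemma cos_pow_le_prod_cos_mul {x : ℝ} (hx : 0 ≤ x) {M : ℕ} (hM : M * x ≤ π / 2) :
    cos (M * x) ^ M ≤ ∏ n ∈ Icc 1 M, cos (n * x) := by
  have hcos : 0 ≤ cos (M * x) := cos_nonneg_of_mem_Icc ⟨by nlinarith [pi_pos], hM⟩
  calc cos (M * x) ^ M = ∏ n ∈ Icc 1 M, cos (M * x) := by simp
    _ ≤ ∏ n ∈ Icc 1 M, cos (n * x) := by
      refine prod_le_prod (fun _ _ ↦ hcos) fun n hn ↦ ?_
      have hnM : (n : ℝ) ≤ M := by exact_mod_cast (mem_Icc.mp hn).2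
      exact cos_le_cos_of_nonneg_of_le_pi (by positivity) (by linarith [pi_pos])
        (mul_le_mul_of_nonneg_right hnM hx)

lemma exp_neg_le_factorial_div_pow_self (N : ℕ) : exp (-N) ≤ N ! / (N : ℝ) ^ N := by
  have hpos : (0 : ℝ) < (N : ℝ) ^ N / N ! := by
    have : (0 : ℝ) < N ^ N := by exact_mod_cast Nat.pow_self_pos
    positivity
  rw [exp_neg, ← inv_div]
  exact inv_anti₀ hpos (pow_div_factorial_le_exp _ N.cast_nonneg N)

lemma factorial_div_pow_self_le_prod_one_sub {M N : ℕ} (h : M < N) :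
    (N ! : ℝ) / N ^ N ≤ ∏ n ∈ Icc 1 M, (1 - n / N : ℝ) := by
  have hN : (0 : ℝ) < N := by exact_mod_cast (zero_le M).trans_lt h
  have hsub : ∀ n ∈ range N, (1 - n / N : ℝ) = ((N - n : ℕ) : ℝ) / N := fun n hn ↦ by
    rw [Nat.cast_sub (mem_range.mp hn).le]; field_simp
  calc (N ! : ℝ) / N ^ N = ∏ n ∈ range N, (1 - n / N : ℝ) := by
        rw [prod_congr rfl hsub, prod_div_distrib, prod_const, card_range, ← Nat.cast_prod,
          ← descFactorial_eq_prod_range, descFactorial_self]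
    _ ≤ ∏ n ∈ Icc 1 M, (1 - n / N : ℝ) := by
      refine prod_le_prod_of_subset_of_le_one (fun n hn ↦ ?_) (fun n hn ↦ ?_) (fun n _ _ ↦ ?_)
      · simp only [mem_Icc, mem_range] at hn ⊢; omega
      · rw [hsub n hn]; positivity
      · have : (0 : ℝ) ≤ n / N := by positivity
        linarith

lemma exp_neg_le_prod_cos_sq_of_two_mul_le {M N : ℕ} (h : 2 * M ≤ N) :
    exp (-(16 * M ^ 3 / N ^ 2)) ≤ (∏ n ∈ Icc 1 M, cos (n * (π / (2 * N)))) ^ 2 := by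
  set x := π / (2 * N)
  have hx : 0 ≤ x := by positivity
  have hMx₀ : 0 ≤ M * x := by positivity
  have hMx : M * x ≤ π / 4 := by
    rcases N.eq_zero_or_pos with rfl | hN
    · simp only [CharP.cast_eq_zero, mul_zero, div_zero, x]; positivity
    have hN' : (0 : ℝ) < N := by exact_mod_cast hN
    have hMN : (M : ℝ) / N ≤ 1 / 2 := by
      have : (2 * M : ℝ) ≤ N := by exact_mod_cast h
      rw [div_le_iff₀ hN']; linarith
    rw [show M * x = M / N * (π / 2) by simp only [x]; field_simp]
    nlinarith [pi_pos]
  have hexp : 2 * M * (M * x) ^ 2 ≤ 16 * M ^ 3 / N ^ 2 := by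
    rw [show 2 * M * (M * x) ^ 2 = π ^ 2 / 2 * (M ^ 3 / N ^ 2) by simp only [x]; ring,
      mul_div_assoc]
    gcongr
    nlinarith [pi_lt_four, pi_pos]
  calc exp (-(16 * M ^ 3 / N ^ 2)) ≤ exp (-(M * x) ^ 2) ^ (2 * M) := by
        rw [← exp_nat_mul, exp_le_exp]; push_cast; linarith
    _ ≤ (cos (M * x) ^ M) ^ 2 := by
        rw [pow_mul']
        gcongr
        exact exp_neg_sq_le_cos (by nlinarith [pi_lt_four])
    _ ≤ (∏ n ∈ Icc 1 M, cos (n * x)) ^ 2 := by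
        have hcos : 0 ≤ cos (M * x) := cos_nonneg_of_mem_Icc ⟨by linarith [pi_pos], by linarith⟩
        gcongr
        exact cos_pow_le_prod_cos_mul hx (by linarith [pi_pos])

lemma exp_neg_le_prod_cos_sq_of_lt_two_mul {M N : ℕ} (hMN : M < N) (h : N < 2 * M) :
    exp (-(16 * M ^ 3 / N ^ 2)) ≤ (∏ n ∈ Icc 1 M, cos (n * (π / (2 * N)))) ^ 2 := by
  have hN : (0 : ℝ) < N := by exact_mod_cast (zero_le M).trans_lt hMN
  have h' : (N : ℝ) < 2 * M := by exact_mod_cast h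
  have hjordan : ∀ n ∈ Icc 1 M,
      0 ≤ (1 - n / N : ℝ) ∧ (1 - n / N : ℝ) ≤ cos (n * (π / (2 * N))) := by
    intro n hn
    have hnN : (n : ℝ) / N ≤ 1 := by
      rw [div_le_one hN]; exact_mod_cast (mem_Icc.mp hn).2.trans hMN.le
    refine ⟨by linarith, ?_⟩
    rw [show (n : ℝ) * (π / (2 * N)) = n / N * (π / 2) by field_simp]
    exact one_sub_le_cos_mul_pi_div_two (by positivity) hnN
  calc exp (-(16 * M ^ 3 / N ^ 2)) ≤ exp (-N) ^ 2 := by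
        have : 2 * (N : ℝ) ≤ 16 * M ^ 3 / N ^ 2 := by
          rw [le_div_iff₀ (by positivity)]
          nlinarith [pow_lt_pow_left₀ h' hN.le (by norm_num : 3 ≠ 0)]
        rw [← exp_nat_mul, exp_le_exp]
        push_cast
        linarith
    _ ≤ ((N ! : ℝ) / N ^ N) ^ 2 := by gcongr; exact exp_neg_le_factorial_div_pow_self N
    _ ≤ (∏ n ∈ Icc 1 M, (1 - n / N : ℝ)) ^ 2 := by
        gcongr; exact factorial_div_pow_self_le_prod_one_sub hMN
    _ ≤ (∏ n ∈ Icc 1 M, cos (n * (π / (2 * N)))) ^ 2 :=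
        pow_le_pow_left₀ (prod_nonneg fun n hn ↦ (hjordan n hn).1)
          (prod_le_prod (fun n hn ↦ (hjordan n hn).1) fun n hn ↦ (hjordan n hn).2) 2

/-- Lemma A.4: two-sided bounds for `∏_{n=1}^M (1 + cos(nπ/N))`, `1 ≤ M < N`. -/
theorem partial_cosine_product_upper_range :
    ∃ c : ℝ, 0 < c ∧ ∀ M N : ℕ, 1 ≤ M → M < N →
      (∏ n ∈ Finset.Icc 1 M, (1 + Real.cos ((n : ℝ) * π / N))) ≤ 2 ^ M ∧
      (2 : ℝ) ^ M * Real.exp (-c * (M : ℝ) ^ 3 / (N : ℝ) ^ 2)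
          ≤ ∏ n ∈ Finset.Icc 1 M, (1 + Real.cos ((n : ℝ) * π / N)) := by
  refine ⟨16, by norm_num, fun M N _ hMN ↦ ⟨?_, ?_⟩⟩
  · calc ∏ n ∈ Icc 1 M, (1 + cos (n * π / N)) ≤ ∏ n ∈ Icc 1 M, (2 : ℝ) :=
          prod_le_prod (fun n _ ↦ by linarith [neg_one_le_cos (n * π / N)])
            fun n _ ↦ by linarith [cos_le_one (n * π / N)]
      _ = 2 ^ M := by simp
  · have hangle : ∀ n : ℕ, (n : ℝ) * π / N / 2 = n * (π / (2 * N)) := fun n ↦ by ring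
    rw [prod_one_add_cos, Nat.card_Icc, Nat.add_sub_cancel, neg_mul, neg_div]
    simp only [hangle]
    gcongr
    rcases le_or_gt (2 * M) N with h | h
    · exact exp_neg_le_prod_cos_sq_of_two_mul_le h
    · exact exp_neg_le_prod_cos_sq_of_lt_two_mul hMN h
end
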